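/- Let □mod7 := {n ∈ ℕ, n ≥ 1 | ∃ x ≥ 1 with x² ≡ n (mod 7)} be the set of positive integers that are congruent to a square modulo 7. Then M(□mod7) = {1, 2, 4, 7, 8, 9, 30, 35, 36, 50, 53, 56, 60, 63, 65, 333, 555, 666}. -/

import Mathlib

/-- `Subseq x y` means the decimal digit string of `x` is a subsequence of that of `y`. -/
def Subseq (x y : ℕ) : Prop := (Nat.digits 10 x).Sublist (Nat.digits 10 y)

/-- The minimal set of `S`: elements of `S` containing no smaller element of `S`
as a subsequence of their decimal digits. -/
def minimalSet (S : Set ℕ) : Set ℕ := {s ∈ S | ¬ ∃ n ∈ S, n < s ∧ Subseq n s}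

/-! A one-digit minimal element of the squares mod 7 is one of the nonzero residue digits
1, 2, 4, 7, 8, 9. A longer minimal element `s` contains none of these digits, since such a digit
alone would be a smaller element of the set; so its digits lie in {0, 3, 5, 6} and its leading
digit `a` is 3, 5 or 6. Another digit `e ≠ a` makes the two-digit subsequence `ea` a square
mod 7; if all digits equal `a`, there are at least three of them (`a` and `aa` are not squares
mod 7) and `aaa` is one. Since a digit subsequence of `s` is never larger than `s`, minimality
forces `s` to be that subsequence. Conversely, the listed numbers are minimal by a finite check of
their digit subsequences. -/

open Nat List

theorem Subseq.le {n s : ℕ} (h : Subseq n s) : n ≤ s := by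
  rcases eq_or_ne s 0 with rfl | hs
  · simp_all [Subseq, digits_eq_nil_iff_eq_zero]
  rcases h.length_le.eq_or_lt with hlen | hlen
  · exact (digits_inj_iff.1 (h.eq_of_length hlen)).le
  · have hn := lt_base_pow_length_digits (b := 10) (m := n) (by norm_num)
    have hs' := base_pow_length_digits_le 10 s (by norm_num) hs
    have hpow := Nat.pow_le_pow_right (n := 10) (by norm_num) hlen
    rw [pow_succ] at hpow
    omega

theorem subseq_ofDigits_of_sublist {l : List ℕ} {s : ℕ} (hl : l <+ digits 10 s)
    (hlast : ∀ h : l ≠ [], l.getLast h ≠ 0) : Subseq (ofDigits 10 l) s := by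
  rwa [Subseq, digits_ofDigits 10 (by norm_num) l
    (fun d hd => digits_lt_base (by norm_num) (hl.subset hd)) hlast]

theorem eq_of_mem_minimalSet {S : Set ℕ} {n s : ℕ} (hs : s ∈ minimalSet S) (hn : n ∈ S)
    (h : Subseq n s) : n = s :=
  h.le.eq_of_not_lt fun hlt => hs.2 ⟨n, hn, hlt, h⟩

theorem mem_minimalSet_of_forall_sublists {S : Set ℕ} {s : ℕ} (hs : s ∈ S)
    (h : ∀ l ∈ (digits 10 s).sublists, ofDigits 10 l < s → ofDigits 10 l ∉ S) :
    s ∈ minimalSet S :=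
  ⟨hs, fun ⟨n, hn, hlt, hsub⟩ => h _ (mem_sublists.2 hsub) (by rwa [ofDigits_digits])
    (by rwa [ofDigits_digits])⟩

def squaresModSeven : Set ℕ := {n : ℕ | 1 ≤ n ∧ ∃ x : ℕ, 1 ≤ x ∧ x ^ 2 ≡ n [MOD 7]}

def minimalSquaresModSeven : Finset ℕ :=
  {1, 2, 4, 7, 8, 9, 30, 35, 36, 50, 53, 56, 60, 63, 65, 333, 555, 666}

theorem exists_sq_modEq_seven_iff (n : ℕ) :
    (∃ x : ℕ, 1 ≤ x ∧ x ^ 2 ≡ n [MOD 7]) ↔ n % 7 ∈ ({0, 1, 2, 4} : Finset ℕ) := by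
  constructor
  · rintro ⟨x, -, hx⟩
    have hres : ∀ r < 7, r ^ 2 % 7 ∈ ({0, 1, 2, 4} : Finset ℕ) := by decide
    rw [show n % 7 = x ^ 2 % 7 from hx.symm, pow_mod]
    exact hres _ (x.mod_lt (by norm_num))
  · intro hn
    have hwit : ∀ r ∈ ({0, 1, 2, 4} : Finset ℕ), ∃ x ∈ Finset.Icc 1 7, x ^ 2 % 7 = r := by
      decide
    obtain ⟨x, hx, hxr⟩ := hwit _ hn
    exact ⟨x, (Finset.mem_Icc.1 hx).1, hxr⟩

theorem mem_squaresModSeven_iff {n : ℕ} :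
    n ∈ squaresModSeven ↔ 1 ≤ n ∧ (n % 7 = 0 ∨ n % 7 = 1 ∨ n % 7 = 2 ∨ n % 7 = 4) := by
  simp only [squaresModSeven, Set.mem_ofPred_eq, exists_sq_modEq_seven_iff, Finset.mem_insert,
    Finset.mem_singleton]

theorem mem_minimalSet_of_mem_minimalSquaresModSeven {s : ℕ}
    (hs : s ∈ minimalSquaresModSeven) : s ∈ minimalSet squaresModSeven := by
  have hcheck : ∀ s ∈ minimalSquaresModSeven, s ∈ squaresModSeven ∧
      ∀ l ∈ (digits 10 s).sublists, ofDigits 10 l < s → ofDigits 10 l ∉ squaresModSeven := by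
    simp only [mem_squaresModSeven_iff]
    decide
  obtain ⟨hsS, hl⟩ := hcheck s hs
  exact mem_minimalSet_of_forall_sublists hsS hl

theorem eq_zero_or_nonresidue_of_mem_digits {s d : ℕ}
    (hs : s ∈ minimalSet squaresModSeven) (h10 : 10 ≤ s) (hd : d ∈ digits 10 s) :
    d = 0 ∨ d = 3 ∨ d = 5 ∨ d = 6 := by
  have hd10 := digits_lt_base (by norm_num) hd
  by_contra hd'
  have hdS : d ∈ squaresModSeven := mem_squaresModSeven_iff.2 ⟨by omega, by omega⟩
  have hds := eq_of_mem_minimalSet hs hdS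
    (by simpa using subseq_ofDigits_of_sublist (l := [d]) (singleton_sublist.2 hd) (by simp; omega))
  omega

theorem mem_minimalSquaresModSeven_of_digits_eq_append {s a : ℕ} {L : List ℕ}
    (hs : s ∈ minimalSet squaresModSeven) (hL : digits 10 s = L ++ [a]) (ha : a ≠ 0)
    (hdig : ∀ d ∈ digits 10 s, d = 0 ∨ d = 3 ∨ d = 5 ∨ d = 6) :
    s ∈ minimalSquaresModSeven := by
  have hsS := mem_squaresModSeven_iff.1 hs.1
  have ha' := hdig a (by simp [hL])
  simp only [minimalSquaresModSeven, Finset.mem_insert, Finset.mem_singleton]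
  by_cases hmix : ∃ e ∈ L, e ≠ a
  · obtain ⟨e, he, hne⟩ := hmix
    have he' := hdig e (by simp [hL, he])
    have hsub : [e, a] <+ digits 10 s := hL ▸ (singleton_sublist.2 he).append (Sublist.refl [a])
    have hsub' : Subseq (e + 10 * a) s := by
      simpa [ofDigits] using subseq_ofDigits_of_sublist hsub (by simpa using ha)
    have hs_eq := eq_of_mem_minimalSet hs (mem_squaresModSeven_iff.2 ⟨by omega, by omega⟩) hsub'
    omega
  · push Not at hmix
    obtain ⟨k, rfl⟩ : ∃ k, L = replicate k a := ⟨_, eq_replicate_iff.2 ⟨rfl, hmix⟩⟩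
    have hsval : s = ofDigits 10 (replicate (k + 1) a) := by
      rw [replicate_succ', ← hL, ofDigits_digits]
    rcases k with _ | _ | k
    · simp at hsval; omega
    · simp [ofDigits, replicate] at hsval; omega
    · have hsub : replicate 3 a <+ digits 10 s := by
        rw [hL, ← replicate_succ']
        exact (replicate_sublist_replicate a).2 (by omega)
      have hsub' : Subseq (a + 10 * (a + 10 * a)) s := by
        simpa [ofDigits, replicate] using subseq_ofDigits_of_sublist hsub (by simpa using ha)
      have hs_eq := eq_of_mem_minimalSet hs (mem_squaresModSeven_iff.2 ⟨by omega, by omega⟩) hsub'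
      omega

theorem mem_minimalSquaresModSeven_of_mem_minimalSet {s : ℕ}
    (hs : s ∈ minimalSet squaresModSeven) : s ∈ minimalSquaresModSeven := by
  obtain ⟨hs1, hs7⟩ := mem_squaresModSeven_iff.1 hs.1
  rcases lt_or_ge s 10 with h10 | h10
  · simp only [minimalSquaresModSeven, Finset.mem_insert, Finset.mem_singleton]
    omega
  obtain ⟨L, a, hL⟩ := (eq_nil_or_concat' _).resolve_left
    (digits_ne_nil_iff_ne_zero.2 (by omega : s ≠ 0))
  have ha : a ≠ 0 := by
    have := getLast_digit_ne_zero 10 (m := s) (by omega)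
    rwa [getLast_congr _ (by simp) hL, getLast_append_singleton] at this
  exact mem_minimalSquaresModSeven_of_digits_eq_append hs hL ha
    fun _ => eq_zero_or_nonresidue_of_mem_digits hs h10

theorem minimalSet_squares_mod_seven :
    minimalSet {n : ℕ | 1 ≤ n ∧ ∃ x : ℕ, 1 ≤ x ∧ x ^ 2 ≡ n [MOD 7]} =
      {1, 2, 4, 7, 8, 9, 30, 35, 36, 50, 53, 56, 60, 63, 65, 333, 555, 666} := by
  ext s
  constructor
  · intro hs
    simpa [minimalSquaresModSeven] using mem_minimalSquaresModSeven_of_mem_minimalSet hs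
  · intro hs
    exact mem_minimalSet_of_mem_minimalSquaresModSeven (by simpa [minimalSquaresModSeven] using hs)
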